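/- Let S = {x ∈ ℝ^d : a_i · x ≤ b_i for i = 1,…,N} be a polyhedron and λ > 0. Define n_S(x, λ) = ReLU( Σ_{i=1}^N n(b_i − a_i · x, λ) − N + 1 ), where n(t, λ) = ReLU(λt + 1) − ReLU(λt). Then n_S(x, λ) = 1 for every x ∈ S, and 0 ≤ n_S(x, λ) ≤ 1 for all x ∈ ℝ^d. -/
import Mathlib


noncomputable def relu (t : ℝ) : ℝ := max 0 t

noncomputable def gate (lam t : ℝ) : ℝ := relu (lam * t + 1) - relu (lam * t)

lemma gate_nonneg (lam t : ℝ) : 0 ≤ gate lam t := by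
  unfold gate relu
  have : max 0 (lam * t) ≤ max 0 (lam * t + 1) := by
    apply max_le_max le_rfl; linarith
  linarith

lemma gate_le_one (lam t : ℝ) : gate lam t ≤ 1 := by
  unfold gate relu
  rcases le_or_gt (lam * t + 1) 0 with h | h
  · rw [max_eq_left h, max_eq_left (by linarith)]; linarith
  · rw [max_eq_right h.le]
    have : lam * t ≤ max 0 (lam * t) := le_max_right _ _
    linarith

lemma gate_eq_one (lam t : ℝ) (hl : 0 < lam) (ht : 0 ≤ t) : gate lam t = 1 := by
  have h : 0 ≤ lam * t := mul_nonneg hl.le ht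
  unfold gate relu
  rw [max_eq_right h, max_eq_right (by linarith)]; ring

theorem stmt_2 (d N : ℕ) (a : Fin N → Fin d → ℝ) (b : Fin N → ℝ)
    (lam : ℝ) (hlam : 0 < lam)
    (nS : (Fin d → ℝ) → ℝ)
    (hnS : ∀ x, nS x = relu ((∑ i, gate lam (b i - ∑ j, a i j * x j)) - N + 1)) :
    (∀ x : Fin d → ℝ, (∀ i, ∑ j, a i j * x j ≤ b i) → nS x = 1) ∧
    (∀ x : Fin d → ℝ, 0 ≤ nS x ∧ nS x ≤ 1) := by
  constructor
  · intro x hx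
    rw [hnS]
    have : ∀ i, gate lam (b i - ∑ j, a i j * x j) = 1 :=
      fun i => gate_eq_one _ _ hlam (by linarith [hx i])
    rw [Finset.sum_congr rfl fun i _ => this i]
    simp [relu]
  · intro x
    rw [hnS]
    refine ⟨le_max_left _ _, ?_⟩
    have hsum : (∑ i, gate lam (b i - ∑ j, a i j * x j)) ≤ N := by
      calc (∑ i, gate lam (b i - ∑ j, a i j * x j)) ≤ ∑ _i : Fin N, (1 : ℝ) :=
            Finset.sum_le_sum fun i _ => gate_le_one _ _
        _ = N := by simp
    unfold relu
    exact max_le (by norm_num) (by linarith)
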